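/- arXiv:0707.1417 — 2 statements merged into one kernel-verified Lean document; each statement's English description precedes it below -/
import Mathlib

section
/- Let d ≥ 1, let C = (C_1,…,C_d) be a coisometric row contraction on H_C and A = (A_1,…,A_d) a row contraction on H_A. There exist operators B_i : H_C → H_A (i = 1,…,d) such that the block operators E_i = [[C_i, 0],[B_i, A_i]] define a coisometric row contraction E on H_C ⊕ H_A (a coisometric lifting of C by A) if and only if there exists a linear isometry from the defect space cl(ran D_{*,A}) ⊆ H_A into the kernel of the row operator of C inside ⊕^d H_C. -/
/-
Writing `E_i = [[C_i, 0], [B_i, A_i]]`, the identity `∑ E_i E_i* = 1` splits into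
`∑ C_i C_i* = 1`, `∑ C_i B_i* = 0` and `∑ B_i B_i* = 1 - ∑ A_i A_i* = D*D` with `D = D_{*,A}`.
For the column `T = (B_1*, …, B_d*) : H_A → ⊕^d H_C` the last two say that `T` maps into
`ker (row C)` and that `T*T = D*D`, i.e. `‖T x‖ = ‖D x‖`. Such a `T` is the same thing as the
isometry `D x ↦ T x` on `ran D`, extended by continuity to its closure; conversely an isometry
`γ` gives `T = γ ∘ D`.
-/

set_option synthInstance.maxHeartbeats 1000000
set_option maxHeartbeats 1000000
noncomputable section

open ContinuousLinearMap

variable {d : ℕ}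
variable {H : Type*} [NormedAddCommGroup H] [InnerProductSpace ℂ H] [CompleteSpace H]

/-- The map Φ_T(X) = ∑ T_i X T_i^*. -/
def cpMap (T : Fin d → H →L[ℂ] H) (X : H →L[ℂ] H) : H →L[ℂ] H :=
  ∑ i, T i ∘L X ∘L adjoint (T i)

/-- Row contraction: ∑ T_i T_i^* ≤ 1. -/
def IsRowContraction (T : Fin d → H →L[ℂ] H) : Prop :=
  ∑ i, T i ∘L adjoint (T i) ≤ 1

/-- The defect operator of T^*: D_{*,T} = (1 - ∑ T_i T_i^*)^(1/2). -/
def defectStar (T : Fin d → H →L[ℂ] H) : H →L[ℂ] H :=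
  CFC.sqrt (1 - ∑ i, T i ∘L adjoint (T i))

/-- product T_α = T_{α₁} ⋯ T_{αₙ} over a word α. -/
def opWord (T : Fin d → H →L[ℂ] H) (α : List (Fin d)) : H →L[ℂ] H :=
  (α.map T).prod

/-- *-stable row contraction. -/
def IsStarStable (T : Fin d → H →L[ℂ] H) : Prop :=
  ∀ h : H, Filter.Tendsto
    (fun n : ℕ => ∑ α : Fin n → Fin d, ‖adjoint (opWord T (List.ofFn α)) h‖ ^ 2)
    Filter.atTop (nhds 0)

instance piLpCompleteSpace {ι : Type*} (G : ι → Type*) [∀ i, NormedAddCommGroup (G i)]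
    [∀ i, CompleteSpace (G i)] : CompleteSpace (PiLp 2 G) :=
  PiLp.completeSpace 2 G

section Row

variable (d)

/-- The row operator of a tuple. -/
def rowOp (T : Fin d → H →L[ℂ] H) : PiLp 2 (fun _ : Fin d => H) →L[ℂ] H :=
  ∑ i, (T i) ∘L (ContinuousLinearMap.proj i) ∘L
    (PiLp.continuousLinearEquiv 2 ℂ (fun _ : Fin d => H)).toContinuousLinearMap

/-- The column operator with components (B i)^*. -/
def colAdj {G : Type*} [NormedAddCommGroup G] [InnerProductSpace ℂ G] [CompleteSpace G]
    (B : Fin d → H →L[ℂ] G) : G →L[ℂ] PiLp 2 (fun _ : Fin d => H) :=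
  ((PiLp.continuousLinearEquiv 2 ℂ (fun _ : Fin d => H)).symm.toContinuousLinearMap) ∘L
    (ContinuousLinearMap.pi (fun i => adjoint (B i)))

/-- The defect operator D_T = (1 - T^* T)^(1/2) of the row operator. -/
def defectRow (T : Fin d → H →L[ℂ] H) :
    PiLp 2 (fun _ : Fin d => H) →L[ℂ] PiLp 2 (fun _ : Fin d => H) :=
  CFC.sqrt (1 - adjoint (rowOp d T) ∘L rowOp d T)

end Row

section Block

variable (HC HA : Type*) [NormedAddCommGroup HC] [InnerProductSpace ℂ HC] [CompleteSpace HC]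
  [NormedAddCommGroup HA] [InnerProductSpace ℂ HA] [CompleteSpace HA]

/-- The Hilbert space direct sum H_C ⊕ H_A. -/
abbrev HilbSum := WithLp 2 (HC × HA)

variable {HC HA}

/-- The block operator [[X₁₁, X₁₂],[X₂₁, X₂₂]] on H_C ⊕ H_A. -/
def blockOp (X11 : HC →L[ℂ] HC) (X12 : HA →L[ℂ] HC)
    (X21 : HC →L[ℂ] HA) (X22 : HA →L[ℂ] HA) :
    HilbSum HC HA →L[ℂ] HilbSum HC HA :=
  ((WithLp.prodContinuousLinearEquiv 2 ℂ HC HA).symm.toContinuousLinearMap) ∘L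
    ((X11 ∘L fst ℂ HC HA + X12 ∘L snd ℂ HC HA).prod
      (X21 ∘L fst ℂ HC HA + X22 ∘L snd ℂ HC HA)) ∘L
    ((WithLp.prodContinuousLinearEquiv 2 ℂ HC HA).toContinuousLinearMap)

/-- Compression of an operator on H_C ⊕ H_A to H_C. -/
def comprC (X : HilbSum HC HA →L[ℂ] HilbSum HC HA) : HC →L[ℂ] HC :=
  (fst ℂ HC HA) ∘L ((WithLp.prodContinuousLinearEquiv 2 ℂ HC HA).toContinuousLinearMap) ∘L X ∘L
    ((WithLp.prodContinuousLinearEquiv 2 ℂ HC HA).symm.toContinuousLinearMap) ∘L (inl ℂ HC HA)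

end Block


/-- The i-th coordinate projection of the d-fold Hilbert space direct sum. -/
def projPiLp {H : Type*} [NormedAddCommGroup H] [InnerProductSpace ℂ H] [CompleteSpace H]
    {d : ℕ} (i : Fin d) : PiLp 2 (fun _ : Fin d => H) →L[ℂ] H :=
  (ContinuousLinearMap.proj i) ∘L
    (PiLp.continuousLinearEquiv 2 ℂ (fun _ : Fin d => H)).toContinuousLinearMap

variable {HC HA : Type*} [NormedAddCommGroup HC] [InnerProductSpace ℂ HC] [CompleteSpace HC]
  [NormedAddCommGroup HA] [InnerProductSpace ℂ HA] [CompleteSpace HA]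

section Operators

variable {V W : Type*} [NormedAddCommGroup V] [InnerProductSpace ℂ V]
  [NormedAddCommGroup W] [InnerProductSpace ℂ W]

theorem blockOp_apply_fst (a : V →L[ℂ] V) (b : W →L[ℂ] V) (c : V →L[ℂ] W)
    (e : W →L[ℂ] W) (z : HilbSum V W) : (blockOp a b c e z).fst = a z.fst + b z.snd :=
  rfl

theorem blockOp_apply_snd (a : V →L[ℂ] V) (b : W →L[ℂ] V) (c : V →L[ℂ] W)
    (e : W →L[ℂ] W) (z : HilbSum V W) : (blockOp a b c e z).snd = c z.fst + e z.snd :=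
  rfl

theorem hilbSum_clm_ext {X Y : HilbSum V W →L[ℂ] HilbSum V W}
    (h : ∀ z, (X z).fst = (Y z).fst ∧ (X z).snd = (Y z).snd) : X = Y :=
  ContinuousLinearMap.ext fun z => WithLp.ofLp_injective 2 (Prod.ext (h z).1 (h z).2)

theorem blockOp_comp (a a' : V →L[ℂ] V) (b b' : W →L[ℂ] V) (c c' : V →L[ℂ] W)
    (e e' : W →L[ℂ] W) :
    blockOp a b c e ∘L blockOp a' b' c' e' =
      blockOp (a ∘L a' + b ∘L c') (a ∘L b' + b ∘L e') (c ∘L a' + e ∘L c') (c ∘L b' + e ∘L e') :=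
  hilbSum_clm_ext fun z => by
    simp only [comp_apply, add_apply, blockOp_apply_fst, blockOp_apply_snd, map_add]
    constructor <;> abel

theorem blockOp_add (a a' : V →L[ℂ] V) (b b' : W →L[ℂ] V) (c c' : V →L[ℂ] W)
    (e e' : W →L[ℂ] W) :
    blockOp a b c e + blockOp a' b' c' e' = blockOp (a + a') (b + b') (c + c') (e + e') :=
  hilbSum_clm_ext fun z => by
    simp only [add_apply, WithLp.add_fst, WithLp.add_snd, blockOp_apply_fst, blockOp_apply_snd]
    constructor <;> abel

theorem blockOp_zero : blockOp (0 : V →L[ℂ] V) (0 : W →L[ℂ] V) 0 0 = 0 :=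
  hilbSum_clm_ext fun z => by simp [blockOp_apply_fst, blockOp_apply_snd]

theorem blockOp_one : blockOp (1 : V →L[ℂ] V) (0 : W →L[ℂ] V) 0 1 = 1 :=
  hilbSum_clm_ext fun z => by simp [blockOp_apply_fst, blockOp_apply_snd]

theorem blockOp_sum {ι : Type*} (s : Finset ι) (a : ι → V →L[ℂ] V) (b : ι → W →L[ℂ] V)
    (c : ι → V →L[ℂ] W) (e : ι → W →L[ℂ] W) :
    ∑ i ∈ s, blockOp (a i) (b i) (c i) (e i) =
      blockOp (∑ i ∈ s, a i) (∑ i ∈ s, b i) (∑ i ∈ s, c i) (∑ i ∈ s, e i) := by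
  induction s using Finset.cons_induction with
  | empty => exact blockOp_zero.symm
  | cons i s hi ih => simp only [Finset.sum_cons, ih, blockOp_add]

theorem adjoint_blockOp [CompleteSpace V] [CompleteSpace W] (a : V →L[ℂ] V) (b : W →L[ℂ] V)
    (c : V →L[ℂ] W) (e : W →L[ℂ] W) :
    adjoint (blockOp a b c e) = blockOp (adjoint a) (adjoint c) (adjoint b) (adjoint e) := by
  refine ((eq_adjoint_iff _ _).mpr fun x y => ?_).symm
  simp only [WithLp.prod_inner_apply, WithLp.ofLp_fst, WithLp.ofLp_snd, blockOp_apply_fst,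
    blockOp_apply_snd, inner_add_left, inner_add_right, adjoint_inner_left]
  ring

theorem blockOp_eq_one_iff (a : V →L[ℂ] V) (b : W →L[ℂ] V) (c : V →L[ℂ] W)
    (e : W →L[ℂ] W) : blockOp a b c e = 1 ↔ a = 1 ∧ b = 0 ∧ c = 0 ∧ e = 1 := by
  refine ⟨fun h => ?_, by rintro ⟨rfl, rfl, rfl, rfl⟩; exact blockOp_one⟩
  have h_fst (x : V) (y : W) : a x + b y = x := by
    simpa [blockOp_apply_fst] using congrArg (fun X => (X (WithLp.toLp 2 (x, y))).fst) h
  have h_snd (x : V) (y : W) : c x + e y = y := by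
    simpa [blockOp_apply_snd] using congrArg (fun X => (X (WithLp.toLp 2 (x, y))).snd) h
  refine ⟨ext fun x => ?_, ext fun y => ?_, ext fun x => ?_, ext fun y => ?_⟩
  · simpa using h_fst x 0
  · simpa using h_fst 0 y
  · simpa using h_snd x 0
  · simpa using h_snd 0 y

theorem sum_blockOp_comp_adjoint_eq_one_iff [CompleteSpace V] [CompleteSpace W] {ι : Type*}
    [Fintype ι] (C : ι → V →L[ℂ] V) (B : ι → V →L[ℂ] W) (A : ι → W →L[ℂ] W) :
    ∑ i, blockOp (C i) 0 (B i) (A i) ∘L adjoint (blockOp (C i) 0 (B i) (A i)) = 1 ↔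
      ∑ i, C i ∘L adjoint (C i) = 1 ∧ ∑ i, C i ∘L adjoint (B i) = 0 ∧
        ∑ i, B i ∘L adjoint (B i) + ∑ i, A i ∘L adjoint (A i) = 1 := by
  simp only [adjoint_blockOp, blockOp_comp, map_zero, zero_comp, comp_zero, add_zero,
    blockOp_sum, blockOp_eq_one_iff, Finset.sum_add_distrib]
  constructor
  · rintro ⟨hCC, hCB, -, hBA⟩
    exact ⟨hCC, hCB, hBA⟩
  · rintro ⟨hCC, hCB, hBA⟩
    refine ⟨hCC, hCB, ?_, hBA⟩
    simpa only [map_sum, adjoint_comp, adjoint_adjoint, map_zero] using congrArg adjoint hCB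

theorem rowOp_apply (T : Fin d → V →L[ℂ] V) (x : PiLp 2 fun _ : Fin d => V) :
    rowOp d T x = ∑ i, T i (x i) := by
  simp [rowOp, sum_apply]

variable [CompleteSpace V] [CompleteSpace W]

theorem colAdj_apply (B : Fin d → V →L[ℂ] W) (y : W) (i : Fin d) :
    colAdj d B y i = adjoint (B i) y :=
  rfl

theorem rowOp_comp_colAdj (T : Fin d → V →L[ℂ] V) (B : Fin d → V →L[ℂ] W) :
    rowOp d T ∘L colAdj d B = ∑ i, T i ∘L adjoint (B i) := by
  ext y
  simp [rowOp_apply, colAdj_apply, sum_apply]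

theorem adjoint_colAdj_comp_colAdj (B : Fin d → V →L[ℂ] W) :
    adjoint (colAdj d B) ∘L colAdj d B = ∑ i, B i ∘L adjoint (B i) := by
  refine ext fun x => ext_inner_right ℂ fun y => ?_
  simp only [comp_apply, adjoint_inner_left, PiLp.inner_apply, colAdj_apply, sum_apply,
    sum_inner, adjoint_inner_right]

theorem colAdj_adjoint_projPiLp_comp (T : W →L[ℂ] PiLp 2 fun _ : Fin d => V) :
    colAdj d (fun i => adjoint (projPiLp i ∘L T)) = T := by
  ext y i
  simp only [colAdj_apply, adjoint_adjoint]
  rfl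

end Operators

theorem adjoint_defectStar_comp_defectStar (A : Fin d → H →L[ℂ] H) (hA : IsRowContraction A) :
    adjoint (defectStar A) ∘L defectStar A = 1 - ∑ i, A i ∘L adjoint (A i) := by
  have h_sa := (CFC.sqrt_nonneg (a := 1 - ∑ i, A i ∘L adjoint (A i))).isSelfAdjoint
  rw [← star_eq_adjoint, defectStar, h_sa.star_eq, ← mul_def]
  exact CFC.sqrt_mul_sqrt_self _ (sub_nonneg.mpr hA)

theorem adjoint_comp_self_eq_iff_norm_eq {E F G : Type*} [NormedAddCommGroup E]
    [InnerProductSpace ℂ E] [CompleteSpace E] [NormedAddCommGroup F] [InnerProductSpace ℂ F]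
    [CompleteSpace F] [NormedAddCommGroup G] [InnerProductSpace ℂ G] [CompleteSpace G]
    (S : E →L[ℂ] F) (T : E →L[ℂ] G) :
    adjoint S ∘L S = adjoint T ∘L T ↔ ∀ x, ‖S x‖ = ‖T x‖ := by
  rw [← coe_inj, ← ext_inner_map]
  refine forall_congr' fun x => ?_
  simp only [coe_coe, comp_apply, adjoint_inner_left, inner_self_eq_norm_sq_to_K]
  norm_cast
  exact sq_eq_sq₀ (norm_nonneg _) (norm_nonneg _)

theorem exists_linearIsometry_closure_range_iff {𝕜 E F G : Type*} [NontriviallyNormedField 𝕜]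
    [NormedAddCommGroup E] [NormedSpace 𝕜 E] [NormedAddCommGroup F] [NormedSpace 𝕜 F]
    [NormedAddCommGroup G] [NormedSpace 𝕜 G] [CompleteSpace G]
    (D : E →L[𝕜] F) {M : Submodule 𝕜 G} (hM : IsClosed (M : Set G)) :
    (∃ γ : (LinearMap.range D.toLinearMap).topologicalClosure →ₗᵢ[𝕜] G, ∀ v, γ v ∈ M) ↔
      ∃ T : E →L[𝕜] G, (∀ x, T x ∈ M) ∧ ∀ x, ‖T x‖ = ‖D x‖ := by
  set W := (LinearMap.range D.toLinearMap).topologicalClosure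
  let K : E →L[𝕜] W := D.codRestrict W fun x => Submodule.le_topologicalClosure _ ⟨x, rfl⟩
  constructor
  · rintro ⟨γ, hγ⟩
    exact ⟨γ.toContinuousLinearMap ∘L K, fun x => hγ (K x), fun x => γ.norm_map (K x)⟩
  · rintro ⟨T, hTM, hT⟩
    have hK : DenseRange K := by
      rw [DenseRange, Subtype.dense_iff, ← Set.range_comp]
      exact (Submodule.topologicalClosure_coe _).le
    set γ := (T : E →ₗ[𝕜] G).extendOfNorm (K : E →ₗ[𝕜] W)
    have hγK : ∀ x, γ (K x) = T x :=
      LinearMap.extendOfNorm_eq hK ⟨1, fun x => by rw [one_mul, coe_coe, hT]; rfl⟩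
    have hγ_norm : ∀ w, ‖γ w‖ = ‖w‖ := fun w => hK.induction_on w
      (isClosed_eq (by fun_prop) continuous_norm) fun x => by rw [hγK, hT]; rfl
    have hγM : ∀ w, γ w ∈ M := fun w => hK.induction_on w (hM.preimage γ.continuous)
      fun x => by rw [hγK]; exact hTM x
    exact ⟨⟨γ.toLinearMap, hγ_norm⟩, hγM⟩

theorem exists_coisometric_lifting_iff (C : Fin d → HC →L[ℂ] HC) (A : Fin d → HA →L[ℂ] HA)
    (hC : ∑ i, C i ∘L adjoint (C i) = 1) (hA : IsRowContraction A) :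
    (∃ B : Fin d → HC →L[ℂ] HA,
        ∑ i, blockOp (C i) 0 (B i) (A i) ∘L adjoint (blockOp (C i) 0 (B i) (A i)) = 1) ↔
      ∃ T : HA →L[ℂ] PiLp 2 (fun _ : Fin d => HC),
        (∀ x, T x ∈ LinearMap.ker (rowOp d C).toLinearMap) ∧ ∀ x, ‖T x‖ = ‖defectStar A x‖ := by
  have lifting_iff (B : Fin d → HC →L[ℂ] HA) :
      ∑ i, blockOp (C i) 0 (B i) (A i) ∘L adjoint (blockOp (C i) 0 (B i) (A i)) = 1 ↔
        rowOp d C ∘L colAdj d B = 0 ∧ ∀ x, ‖colAdj d B x‖ = ‖defectStar A x‖ := by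
    rw [sum_blockOp_comp_adjoint_eq_one_iff, rowOp_comp_colAdj, ← adjoint_comp_self_eq_iff_norm_eq,
      adjoint_colAdj_comp_colAdj, adjoint_defectStar_comp_defectStar A hA, eq_sub_iff_add_eq]
    simp only [hC, true_and]
  constructor
  · rintro ⟨B, hB⟩
    obtain ⟨hrow, hnorm⟩ := (lifting_iff B).mp hB
    exact ⟨colAdj d B, fun x => LinearMap.mem_ker.mpr (DFunLike.congr_fun hrow x), hnorm⟩
  · rintro ⟨T, hker, hnorm⟩
    refine ⟨fun i => adjoint (projPiLp i ∘L T), (lifting_iff _).mpr ?_⟩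
    rw [colAdj_adjoint_projPiLp_comp]
    exact ⟨ext fun x => hker x, hnorm⟩

theorem stmt4_general {d : ℕ}
    (C : Fin d → HC →L[ℂ] HC) (A : Fin d → HA →L[ℂ] HA)
    (hC : ∑ i, C i ∘L adjoint (C i) = 1) (hA : IsRowContraction A) :
    (∃ B : Fin d → HC →L[ℂ] HA,
        ∑ i, blockOp (C i) 0 (B i) (A i) ∘L adjoint (blockOp (C i) 0 (B i) (A i)) = 1) ↔
      (∃ γ : ↥((LinearMap.range (defectStar A).toLinearMap).topologicalClosure) →ₗᵢ[ℂ]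
          PiLp 2 (fun _ : Fin d => HC),
        ∀ v, γ v ∈ LinearMap.ker (rowOp d C).toLinearMap) :=
  (exists_coisometric_lifting_iff C A hC hA).trans
    (exists_linearIsometry_closure_range_iff _ (rowOp d C).isClosed_ker).symm

/-- a coisometric lifting of `C` by `A` exists iff there is a linear isometry
from `cl(ran D_{*,A})` into `ker(row C)`. -/
theorem stmt4 {d : ℕ} (hd : 1 ≤ d)
    (C : Fin d → HC →L[ℂ] HC) (A : Fin d → HA →L[ℂ] HA)
    (hC : ∑ i, C i ∘L adjoint (C i) = 1) (hA : IsRowContraction A) :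
    (∃ B : Fin d → HC →L[ℂ] HA,
        ∑ i, blockOp (C i) 0 (B i) (A i) ∘L adjoint (blockOp (C i) 0 (B i) (A i)) = 1) ↔
      (∃ γ : ↥((LinearMap.range (defectStar A).toLinearMap).topologicalClosure) →ₗᵢ[ℂ]
          PiLp 2 (fun _ : Fin d => HC),
        ∀ v, γ v ∈ LinearMap.ker (rowOp d C).toLinearMap) :=
  stmt4_general C A hC hA

end
end

section
/- Let d ≥ 1, let A = (A_1,…,A_d) be a row contraction on H_A and let γ : H_A → G be a bounded operator into a Hilbert space G. Call γ resolving if for every h ∈ H_A, (γ D_{*,A} A_α* h = 0 for all multi-indices α) implies (D_{*,A} A_α* h = 0 for all multi-indices α); call A completely non-coisometric (c.n.c.) if for every h ≠ 0 there exists n ∈ ℕ with ∑_{|α|=n} ‖A_α* h‖² < ‖h‖². Then the following are equivalent: (a) A is c.n.c. and γ is resolving; (b) { h ∈ H_A : γ D_{*,A} A_α* h = 0 for all multi-indices α } = {0}. -/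
set_option synthInstance.maxHeartbeats 1000000
set_option maxHeartbeats 1000000
noncomputable section

open ContinuousLinearMap

variable {d : ℕ}
variable {H : Type*} [NormedAddCommGroup H] [InnerProductSpace ℂ H] [CompleteSpace H]

variable {HA G : Type*} [NormedAddCommGroup HA] [InnerProductSpace ℂ HA] [CompleteSpace HA]
  [NormedAddCommGroup G] [InnerProductSpace ℂ G] [CompleteSpace G]

/-- `γ` is resolving for the row contraction `A`. -/
def Resolving {d : ℕ} (A : Fin d → HA →L[ℂ] HA) (γ : HA →L[ℂ] G) : Prop :=
  ∀ h : HA, (∀ α : List (Fin d), γ (defectStar A (adjoint (opWord A α) h)) = 0) →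
    (∀ α : List (Fin d), defectStar A (adjoint (opWord A α) h) = 0)

/-- `A` is completely non-coisometric. -/
def IsCNC {d : ℕ} (A : Fin d → HA →L[ℂ] HA) : Prop :=
  ∀ h : HA, h ≠ 0 →
    ∃ n : ℕ, ∑ α : Fin n → Fin d, ‖adjoint (opWord A (List.ofFn α)) h‖ ^ 2 < ‖h‖ ^ 2

/-! The defect identity `‖D_{*,A} k‖² = ‖k‖² - ∑ᵢ ‖Aᵢ* k‖²`, applied along words and summed,
telescopes to `‖h‖² - ∑_{|α|=n} ‖A_α* h‖² = ∑_{|α|<n} ‖D_{*,A} A_α* h‖²`. Hence the sums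
`∑_{|α|=n} ‖A_α* h‖²` all equal `‖h‖²` exactly when `D_{*,A} A_α* h = 0` for every word `α`, so
`A` is c.n.c. iff no nonzero `h` has all these defects vanishing. The theorem is then a matter
of logic: the `h` in the set of (b) are those whose defects are killed by `γ`. -/

theorem sum_fun_fin_succ_ofFn {α M : Type*} [Fintype α] [AddCommMonoid M] (n : ℕ)
    (f : List α → M) :
    ∑ w : Fin (n + 1) → α, f (List.ofFn w) = ∑ a, ∑ w : Fin n → α, f (a :: List.ofFn w) := by
  rw [← (Fin.consEquiv fun _ => α).sum_comp, Fintype.sum_prod_type]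
  simp only [Fin.consEquiv_apply, List.ofFn_succ, Fin.cons_zero, Fin.cons_succ]

section DefectIdentity

variable (A : Fin d → HA →L[ℂ] HA)

def wordAdjNormSq (n : ℕ) (h : HA) : ℝ :=
  ∑ α : Fin n → Fin d, ‖adjoint (opWord A (List.ofFn α)) h‖ ^ 2

theorem adjoint_defectStar : adjoint (defectStar A) = defectStar A :=
  (IsSelfAdjoint.of_nonneg (CFC.sqrt_nonneg _)).adjoint_eq

variable {A}

theorem norm_defectStar_apply_sq (hA : IsRowContraction A) (k : HA) :
    ‖defectStar A k‖ ^ 2 = ‖k‖ ^ 2 - ∑ i, ‖adjoint (A i) k‖ ^ 2 := by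
  have hD : adjoint (defectStar A) ∘L defectStar A = 1 - ∑ i, A i ∘L adjoint (A i) := by
    rw [adjoint_defectStar, ← mul_def]
    exact CFC.sqrt_mul_sqrt_self _ (sub_nonneg.mpr hA)
  rw [apply_norm_sq_eq_inner_adjoint_left, hD]
  simp only [sub_apply, one_apply_eq_self, sum_apply, inner_sub_left, sum_inner,
    map_sub, map_sum, inner_self_eq_norm_sq, apply_norm_sq_eq_inner_adjoint_left (adjoint _),
    adjoint_adjoint]

variable (A)

theorem adjoint_opWord_cons_apply (i : Fin d) (α : List (Fin d)) (h : HA) :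
    adjoint (opWord A (i :: α)) h = adjoint (opWord A α) (adjoint (A i) h) := by
  rw [opWord, List.map_cons, List.prod_cons, mul_def, adjoint_comp, comp_apply]
  rfl

theorem adjoint_opWord_nil : adjoint (opWord A []) = 1 := by
  simp [opWord, one_def, adjoint_id]

theorem wordAdjNormSq_zero (h : HA) : wordAdjNormSq A 0 h = ‖h‖ ^ 2 := by
  simp [wordAdjNormSq, adjoint_opWord_nil]

theorem wordAdjNormSq_succ (n : ℕ) (h : HA) :
    wordAdjNormSq A (n + 1) h = ∑ i, wordAdjNormSq A n (adjoint (A i) h) := by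
  simp only [wordAdjNormSq, ← adjoint_opWord_cons_apply]
  exact sum_fun_fin_succ_ofFn n fun w => ‖adjoint (opWord A w) h‖ ^ 2

variable {A}

theorem sum_range_norm_defectStar_sq (hA : IsRowContraction A) (n : ℕ) (h : HA) :
    ∑ k ∈ Finset.range n, ∑ α : Fin k → Fin d,
        ‖defectStar A (adjoint (opWord A (List.ofFn α)) h)‖ ^ 2 =
      ‖h‖ ^ 2 - wordAdjNormSq A n h := by
  induction n generalizing h with
  | zero => simp [wordAdjNormSq_zero]
  | succ n ih =>
    have hsplit (k : ℕ) : ∑ α : Fin (k + 1) → Fin d,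
        ‖defectStar A (adjoint (opWord A (List.ofFn α)) h)‖ ^ 2 = ∑ i, ∑ α : Fin k → Fin d,
          ‖defectStar A (adjoint (opWord A (List.ofFn α)) (adjoint (A i) h))‖ ^ 2 := by
      simp only [← adjoint_opWord_cons_apply]
      exact sum_fun_fin_succ_ofFn k fun w => ‖defectStar A (adjoint (opWord A w) h)‖ ^ 2
    simp only [Finset.sum_range_succ', hsplit]
    rw [Finset.sum_comm, Fintype.sum_congr _ _ fun i => ih _,
      Fintype.sum_unique (ι := Fin 0 → Fin d), List.ofFn_zero, adjoint_opWord_nil,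
      one_apply_eq_self, norm_defectStar_apply_sq hA, wordAdjNormSq_succ,
      Finset.sum_sub_distrib]
    ring

end DefectIdentity

section CNC

variable {A : Fin d → HA →L[ℂ] HA}

theorem wordAdjNormSq_le (hA : IsRowContraction A) (n : ℕ) (h : HA) :
    wordAdjNormSq A n h ≤ ‖h‖ ^ 2 := by
  rw [← sub_nonneg, ← sum_range_norm_defectStar_sq hA]
  positivity

theorem forall_defectStar_adjoint_opWord_eq_zero_iff (hA : IsRowContraction A) (h : HA) :
    (∀ α : List (Fin d), defectStar A (adjoint (opWord A α) h) = 0) ↔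
      ∀ n, wordAdjNormSq A n h = ‖h‖ ^ 2 := by
  constructor
  · intro hD n
    have htel := sum_range_norm_defectStar_sq hA n h
    simp only [hD, norm_zero, zero_pow two_ne_zero, Finset.sum_const_zero] at htel
    linarith
  · intro hS α
    have htel := sum_range_norm_defectStar_sq hA (α.length + 1) h
    rw [hS, sub_self, Finset.sum_eq_zero_iff_of_nonneg fun _ _ => by positivity] at htel
    have hlen := htel α.length (Finset.self_mem_range_succ _)
    rw [Finset.sum_eq_zero_iff_of_nonneg fun _ _ => by positivity] at hlen
    simpa [List.ofFn_get] using hlen α.get (Finset.mem_univ _)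

theorem isCNC_iff_forall_defectStar_adjoint_opWord_eq_zero (hA : IsRowContraction A) :
    IsCNC A ↔ ∀ h : HA, (∀ α : List (Fin d), defectStar A (adjoint (opWord A α) h) = 0) →
      h = 0 := by
  simp only [forall_defectStar_adjoint_opWord_eq_zero_iff hA]
  refine forall_congr' fun h => ⟨fun hcnc hS => ?_, fun hD hne => ?_⟩
  · by_contra hne
    obtain ⟨n, hn⟩ := hcnc hne
    exact hn.ne (hS n)
  · by_contra! hge
    exact hne (hD fun n => (wordAdjNormSq_le hA n h).antisymm (hge n))

end CNC

theorem stmt6_general {d : ℕ} (A : Fin d → HA →L[ℂ] HA)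
    (hA : IsRowContraction A) (γ : HA →L[ℂ] G) :
    (IsCNC A ∧ Resolving A γ) ↔
      ({h : HA | ∀ α : List (Fin d), γ (defectStar A (adjoint (opWord A α) h)) = 0}
        = {0}) := by
  rw [isCNC_iff_forall_defectStar_adjoint_opWord_eq_zero hA, Set.eq_singleton_iff_unique_mem]
  simp only [Resolving, Set.mem_ofPred_eq, map_zero, implies_true, true_and]
  refine ⟨fun ⟨hcnc, hres⟩ h hh => hcnc h (hres h hh), fun hset => ⟨fun h hD => ?_, ?_⟩⟩
  · exact hset h fun α => by rw [hD α, map_zero]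
  · intro h hh α
    rw [hset h hh, map_zero, map_zero]

/-- `A` is c.n.c. and `γ` resolving iff the only `h` with
`γ D_{*,A} A_α* h = 0` for all `α` is `h = 0`. -/
theorem stmt6 {d : ℕ} (hd : 1 ≤ d) (A : Fin d → HA →L[ℂ] HA)
    (hA : IsRowContraction A) (γ : HA →L[ℂ] G) :
    (IsCNC A ∧ Resolving A γ) ↔
      ({h : HA | ∀ α : List (Fin d), γ (defectStar A (adjoint (opWord A α) h)) = 0}
        = {0}) :=
  stmt6_general A hA γ

end
end
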